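/- In the nonabelian group G of order 21, there is no automorphism ψ ∈ Aut(G) and no element a of order 3 with ψ(a) = a⁻¹. -/
import Mathlib


/-- In the nonabelian group of order 21, there is no automorphism ψ and no
element a of order 3 with ψ(a) = a⁻¹. -/
theorem no_aut_inverting_order_three_element (G : Type*) [Group G]
    (hcard : Nat.card G = 21) (hnonab : ¬∀ x y : G, x * y = y * x) :
    ¬∃ ψ : G ≃* G, ∃ a : G, orderOf a = 3 ∧ ψ a = a⁻¹ := by
  rintro ⟨ψ, a, ha3, hψa⟩
  have hfin : Finite G := Nat.finite_of_card_ne_zero (by omega)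
  have hp7 : Fact (Nat.Prime 7) := ⟨by norm_num⟩
  obtain ⟨b, hb⟩ := exists_prime_orderOf_dvd_card' (G := G) 7 (by rw [hcard]; norm_num)
  have hP : ∀ P : Sylow 7 G, Nat.card P = 7 := by
    intro P
    rw [Sylow.card_eq_multiplicity, hcard]
    have : (Nat.factorization 21) 7 = 1 := by
      rw [show (21:ℕ) = 7 * 3 by norm_num, Nat.factorization_mul (by norm_num) (by norm_num)]
      simp [Nat.Prime.factorization (by norm_num : Nat.Prime 7),
        Nat.Prime.factorization (by norm_num : Nat.Prime 3)]
    rw [this]; norm_num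
  have hcardSyl : Nat.card (Sylow 7 G) = 1 := by
    have h1 := card_sylow_modEq_one 7 G
    have P : Sylow 7 G := default
    have h2 := Sylow.card_dvd_index P
    have h3 : (P : Subgroup G).index = 3 := by
      have := Subgroup.card_mul_index (P : Subgroup G)
      rw [hP P, hcard] at this
      omega
    rw [h3] at h2
    have h4 := Nat.le_of_dvd (by norm_num) h2
    simp only [Nat.ModEq] at h1
    interval_cases h : Nat.card (Sylow 7 G) <;> omega
  have hsub : Subsingleton (Sylow 7 G) := (Nat.card_eq_one_iff_unique.mp hcardSyl).1
  have key : ∀ x : G, orderOf x = 7 → x ∈ Subgroup.zpowers b := by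
    have sylOf : ∀ x : G, orderOf x = 7 → ∃ P : Sylow 7 G,
        Subgroup.zpowers x ≤ (P : Subgroup G) := by
      intro x hx
      exact IsPGroup.exists_le_sylow (IsPGroup.of_card (by
        rw [Nat.card_zpowers, hx, pow_one]))
    intro x hx
    obtain ⟨P, hPx⟩ := sylOf x hx
    obtain ⟨Q, hQb⟩ := sylOf b hb
    have hPQ : P = Q := Subsingleton.elim P Q
    have hbQ : Subgroup.zpowers b = (Q : Subgroup G) :=
      Subgroup.eq_of_le_of_card_ge hQb (by rw [hP Q, Nat.card_zpowers, hb])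
    rw [hbQ, ← hPQ]
    exact hPx (Subgroup.mem_zpowers x)
  -- conjugation relation
  have horda : orderOf (a * b * a⁻¹) = 7 := by
    rw [← hb]
    simpa using (MulAut.conj a).orderOf_eq b
  obtain ⟨k, hk0⟩ := key _ horda
  have hk : a * b * a⁻¹ = b ^ k := hk0.symm
  have hψbm : ψ b ∈ Subgroup.zpowers b := key _ (by rw [ψ.orderOf_eq b, hb])
  obtain ⟨m, hm0⟩ := hψbm
  have hm : ψ b = b ^ m := hm0.symm
  have hbpow : ∀ n : ℤ, b ^ n = 1 ↔ (n : ZMod 7) = 0 := by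
    intro n
    rw [← orderOf_dvd_iff_zpow_eq_one, hb, ← ZMod.intCast_zmod_eq_zero_iff_dvd]
  have haaa : a * a * a = 1 := by
    have : a ^ (3:ℕ) = 1 := by rw [← ha3]; exact pow_orderOf_eq_one a
    calc a * a * a = a ^ (3:ℕ) := by rw [pow_succ, pow_succ, pow_one]
      _ = 1 := this
  have conj1 : ∀ n : ℤ, a * b ^ n * a⁻¹ = b ^ (k * n) := by
    intro n
    rw [zpow_mul, ← hk, conj_zpow]
  -- k^3 ≡ 1
  have hk3 : ((k : ZMod 7) ^ 3 = 1) := by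
    have e2 : a * (a * b * a⁻¹) * a⁻¹ = b ^ (k * k) := by
      rw [hk, conj1]
    have e3 : a * (a * (a * b * a⁻¹) * a⁻¹) * a⁻¹ = b ^ (k * (k * k)) := by
      rw [e2, conj1]
    have e4 : a * (a * (a * b * a⁻¹) * a⁻¹) * a⁻¹ = b := by
      have h5 : a * (a * (a * b * a⁻¹) * a⁻¹) * a⁻¹ = (a*a*a) * b * (a*a*a)⁻¹ := by
        group
      rw [h5, haaa]; group
    have : b ^ (k * (k * k) - 1) = 1 := by
      rw [zpow_sub, ← e3, e4, zpow_one, mul_inv_cancel]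
    rw [hbpow] at this
    push_cast at this
    linear_combination this
  -- k ≢ 1
  have hk1 : (k : ZMod 7) ≠ 1 := by
    intro h
    have hbk : b ^ k = b := by
      have h1 : b ^ (k - 1) = 1 := by
        rw [hbpow]; push_cast; linear_combination h
      calc b ^ k = b ^ (k-1) * b ^ (1:ℤ) := by rw [← zpow_add, sub_add_cancel]
        _ = b := by rw [h1]; simp
    have hconj : a * b * a⁻¹ = b := by rw [hk, hbk]
    have hcomm : a * b = b * a := by
      calc a * b = (a * b * a⁻¹) * a := by group
        _ = b * a := by rw [hconj]
    apply hnonab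
    have hcop : Nat.Coprime (orderOf a) (orderOf b) := by rw [ha3, hb]; norm_num
    have hord : orderOf (a * b) = 21 := by
      rw [Commute.orderOf_mul_eq_mul_orderOf_of_coprime hcomm hcop, ha3, hb]
    have : IsCyclic G := isCyclic_of_orderOf_eq_card (a*b) (by rw [hord, hcard])
    obtain ⟨g, hg⟩ := this.exists_generator
    intro x y
    obtain ⟨i, rfl⟩ := hg x
    obtain ⟨j, rfl⟩ := hg y
    rw [← zpow_add, ← zpow_add, add_comm]
  -- m ≠ 0
  have hm0' : (m : ZMod 7) ≠ 0 := by
    intro h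
    rw [← hbpow, ← hm] at h
    have : b = 1 := ψ.injective (by simpa using h)
    rw [this] at hb; simp at hb
  have conjinv : ∀ n : ℤ, a⁻¹ * b ^ n * a = b ^ (k * k * n) := by
    intro n
    have h2 : a * b ^ (k*k*n) * a⁻¹ = b ^ (k*(k*k*n)) := conj1 _
    have h3 : b ^ (k*(k*k*n)) = b ^ n := by
      have h4 : b ^ (k*(k*k*n) - n) = 1 := by
        rw [hbpow]; push_cast; linear_combination (n : ZMod 7) * hk3
      calc b ^ (k*(k*k*n)) = b ^ (k*(k*k*n) - n) * b ^ n := by rw [← zpow_add, sub_add_cancel]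
        _ = b ^ n := by rw [h4, one_mul]
    have h5 : a * b ^ (k*k*n) * a⁻¹ = b ^ n := h2.trans h3
    rw [← h5]; group
  -- apply ψ
  have happ : a⁻¹ * b ^ m * a = b ^ (m * k) := by
    have h6 := congrArg ψ hk
    rw [map_mul, map_mul, map_inv, hψa, hm, map_zpow, hm] at h6
    rw [inv_inv] at h6
    rw [h6, ← zpow_mul, mul_comm]
  have h2 : b ^ (m * k) = b ^ (k * k * m) := by rw [← happ, conjinv]
  have h3 : b ^ (m * k - k * k * m) = 1 := by
    rw [zpow_sub, h2, mul_inv_cancel]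
  rw [hbpow] at h3
  push_cast at h3
  set K := (k : ZMod 7)
  set M := (m : ZMod 7)
  have hK0 : K ≠ 0 := by
    intro h; rw [h] at hk3; simp at hk3
  have hKm1 : K - 1 ≠ 0 := by
    intro h; apply hk1; linear_combination h
  have hprod : M * (K * (K - 1)) = 0 := by linear_combination -h3
  rcases mul_eq_zero.mp hprod with h | h
  · exact hm0' h
  rcases mul_eq_zero.mp h with h | h
  · exact hK0 h
  · exact hKm1 h
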